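/- arXiv:2511.11135 — 3 statements merged into one kernel-verified Lean document; each statement's English description precedes it below -/
import Mathlib

section
/- Let A be a real symmetric n×n matrix, b ∈ ℝⁿ, Δ > 0, and σ ≥ 0 a scalar such that A + σI is positive semidefinite, (A + σI)x = b, and ‖x‖ = Δ. Then x is a global minimizer of q(x) = (1/2) xᵀ A x - bᵀ x over the ball {y : ‖y‖ ≤ Δ}. -/
/-!
Write `B = A + σ I`, so that `B x = b` and `B ⪰ 0`. Completing the square gives
`q(y) - q(x) = ½ (y - x)ᵀ B (y - x) + ½ σ (‖x‖² - ‖y‖²)`,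
and both terms are nonnegative once `‖y‖ ≤ Δ = ‖x‖` and `σ ≥ 0`.
-/

open Matrix

namespace Matrix

variable {ι R : Type*} [Fintype ι]

theorem IsSymm.dotProduct_mulVec_sub_sub [CommRing R] {B : Matrix ι ι R} (hB : B.IsSymm)
    (x y : ι → R) :
    (y - x) ⬝ᵥ (B *ᵥ (y - x)) = y ⬝ᵥ (B *ᵥ y) - 2 * (y ⬝ᵥ (B *ᵥ x)) + x ⬝ᵥ (B *ᵥ x) := by
  have hswap : x ⬝ᵥ (B *ᵥ y) = y ⬝ᵥ (B *ᵥ x) := by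
    rw [dotProduct_mulVec, ← mulVec_transpose, hB.eq, dotProduct_comm]
  simp only [mulVec_sub, dotProduct_sub, sub_dotProduct, hswap]
  ring

theorem dotProduct_add_smul_one_mulVec [CommRing R] [DecidableEq ι] (A : Matrix ι ι R)
    (σ : R) (y : ι → R) :
    y ⬝ᵥ ((A + σ • (1 : Matrix ι ι R)) *ᵥ y) = y ⬝ᵥ (A *ᵥ y) + σ * (y ⬝ᵥ y) := by
  rw [add_mulVec, smul_mulVec, one_mulVec, dotProduct_add, dotProduct_smul, smul_eq_mul]

theorem PosSemidef.quadratic_le_of_mulVec_eq {B : Matrix ι ι ℝ} (hB : B.PosSemidef)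
    {b x : ι → ℝ} (hx : B *ᵥ x = b) (y : ι → ℝ) :
    (1/2) * (x ⬝ᵥ (B *ᵥ x)) - b ⬝ᵥ x ≤ (1/2) * (y ⬝ᵥ (B *ᵥ y)) - b ⬝ᵥ y := by
  have hcurv : 0 ≤ (y - x) ⬝ᵥ (B *ᵥ (y - x)) := by
    simpa using hB.dotProduct_mulVec_nonneg (y - x)
  rw [(isHermitian_iff_isSymm.mp hB.isHermitian).dotProduct_mulVec_sub_sub] at hcurv
  rw [← hx, dotProduct_comm _ x, dotProduct_comm _ y]
  linarith

end Matrix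

theorem stmt1_general {n : ℕ} (A : Matrix (Fin n) (Fin n) ℝ) (b x : Fin n → ℝ) (Δ σ : ℝ)
    (hσ : 0 ≤ σ)
    (hpsd : (A + σ • (1 : Matrix (Fin n) (Fin n) ℝ)).PosSemidef)
    (hx : (A + σ • (1 : Matrix (Fin n) (Fin n) ℝ)) *ᵥ x = b)
    (hnorm : Real.sqrt (x ⬝ᵥ x) = Δ) :
    ∀ y : Fin n → ℝ, Real.sqrt (y ⬝ᵥ y) ≤ Δ →
      (1/2) * (x ⬝ᵥ (A *ᵥ x)) - b ⬝ᵥ x ≤ (1/2) * (y ⬝ᵥ (A *ᵥ y)) - b ⬝ᵥ y := by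
  intro y hy
  have hyx : y ⬝ᵥ y ≤ x ⬝ᵥ x := by
    rw [← hnorm, Real.sqrt_le_sqrt_iff (by simpa using dotProduct_self_star_nonneg x)] at hy
    exact hy
  have hmodel := hpsd.quadratic_le_of_mulVec_eq hx y
  rw [dotProduct_add_smul_one_mulVec, dotProduct_add_smul_one_mulVec] at hmodel
  linarith [mul_le_mul_of_nonneg_left hyx hσ]

theorem stmt1 {n : ℕ} (A : Matrix (Fin n) (Fin n) ℝ) (b x : Fin n → ℝ) (Δ σ : ℝ)
    (hA : A.IsSymm) (hΔ : 0 < Δ) (hσ : 0 ≤ σ)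
    (hpsd : (A + σ • (1 : Matrix (Fin n) (Fin n) ℝ)).PosSemidef)
    (hx : (A + σ • (1 : Matrix (Fin n) (Fin n) ℝ)) *ᵥ x = b)
    (hnorm : Real.sqrt (x ⬝ᵥ x) = Δ) :
    ∀ y : Fin n → ℝ, Real.sqrt (y ⬝ᵥ y) ≤ Δ →
      (1/2) * (x ⬝ᵥ (A *ᵥ x)) - b ⬝ᵥ x ≤ (1/2) * (y ⬝ᵥ (A *ᵥ y)) - b ⬝ᵥ y :=
  stmt1_general A b x Δ σ hσ hpsd hx hnorm
end

section
/- Let A be a real symmetric n×n matrix, b ∈ ℝⁿ, ρ > 0, r ≥ 2, and σ a scalar with σ = ρ‖x‖^{r-2}, (A + σI)x = b, and A + σI positive semidefinite. Then x is a global minimizer of f(y) = (1/2) yᵀ A y - bᵀ y + (ρ/r)‖y‖^r over ℝⁿ. -/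
open Matrix

/-!
With `M = A + σ • 1` the objective splits as `f y = (yᵀ M y / 2 - bᵀ y) + φ ‖y‖` where
`φ t = ρ / r * t ^ r - σ / 2 * t ^ 2`. The quadratic part is minimized at `x` because `M` is
positive semidefinite and `M x = b`; and `φ` is minimized on `t ≥ 0` at `t = ‖x‖`, because
`σ = ρ ‖x‖ ^ (r - 2)` turns `φ t ≥ φ ‖x‖` into the weighted AM-GM inequality
`‖x‖ ^ (r - 2) * t ^ 2 ≤ (1 - 2 / r) ‖x‖ ^ r + (2 / r) t ^ r`.
-/

lemma Real.rpow_sub_two_mul_sq {r s : ℝ} (hr : 2 ≤ r) (hs : 0 ≤ s) :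
    s ^ (r - 2) * s ^ 2 = s ^ r := by
  rw [← Real.rpow_two, ← Real.rpow_add' hs (by linarith), sub_add_cancel]

lemma Real.rpow_sub_two_mul_sq_le {r s t : ℝ} (hr : 2 ≤ r) (hs : 0 ≤ s) (ht : 0 ≤ t) :
    s ^ (r - 2) * t ^ 2 ≤ (1 - 2 / r) * s ^ r + 2 / r * t ^ r := by
  have hr0 : 0 < r := by linarith
  have hw : 0 ≤ 1 - 2 / r := by rw [sub_nonneg, div_le_one hr0]; exact hr
  have key := Real.geom_mean_le_arith_mean2_weighted hw (by positivity)
    (Real.rpow_nonneg hs r) (Real.rpow_nonneg ht r) (sub_add_cancel 1 (2 / r))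
  rw [← Real.rpow_mul hs, ← Real.rpow_mul ht, mul_one_sub, mul_div_cancel₀ _ hr0.ne'] at key
  exact_mod_cast key

lemma rpow_div_sub_sq_le {ρ r s t : ℝ} (hρ : 0 ≤ ρ) (hr : 2 ≤ r) (hs : 0 ≤ s) (ht : 0 ≤ t) :
    ρ / r * s ^ r - ρ * s ^ (r - 2) / 2 * s ^ 2 ≤ ρ / r * t ^ r - ρ * s ^ (r - 2) / 2 * t ^ 2 := by
  have hamgm := mul_le_mul_of_nonneg_left (Real.rpow_sub_two_mul_sq_le hr hs ht) hρ
  have hs2 : ρ * s ^ (r - 2) / 2 * s ^ 2 = ρ / 2 * s ^ r := by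
    rw [← Real.rpow_sub_two_mul_sq hr hs]; ring
  rw [hs2]
  linear_combination hamgm / 2

lemma Matrix.IsSymm.quadratic_eq_of_mulVec_eq {ι : Type*} [Fintype ι] {M : Matrix ι ι ℝ}
    (hM : M.IsSymm) {x b : ι → ℝ} (hx : M *ᵥ x = b) (y : ι → ℝ) :
    y ⬝ᵥ (M *ᵥ y) / 2 - b ⬝ᵥ y
      = x ⬝ᵥ (M *ᵥ x) / 2 - b ⬝ᵥ x + (y - x) ⬝ᵥ (M *ᵥ (y - x)) / 2 := by
  have hxy : x ⬝ᵥ (M *ᵥ y) = b ⬝ᵥ y := by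
    rw [dotProduct_mulVec, ← mulVec_transpose, hM.eq, hx]
  rw [mulVec_sub, sub_dotProduct, dotProduct_sub, dotProduct_sub, hxy, hx,
    dotProduct_comm x b, dotProduct_comm y b]
  ring

lemma Matrix.PosSemidef.quadratic_le_of_mulVec_eq_s2 {ι : Type*} [Fintype ι] {M : Matrix ι ι ℝ}
    (hM : M.PosSemidef) {x b : ι → ℝ} (hx : M *ᵥ x = b) (y : ι → ℝ) :
    x ⬝ᵥ (M *ᵥ x) / 2 - b ⬝ᵥ x ≤ y ⬝ᵥ (M *ᵥ y) / 2 - b ⬝ᵥ y := by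
  have hsymm : M.IsSymm := (by simpa [IsHermitian] using hM.isHermitian : Mᵀ = M)
  rw [hsymm.quadratic_eq_of_mulVec_eq hx y, le_add_iff_nonneg_right]
  simpa using div_nonneg (hM.dotProduct_mulVec_nonneg (y - x)) zero_le_two

theorem stmt2_general {n : ℕ} (A : Matrix (Fin n) (Fin n) ℝ) (b x : Fin n → ℝ) (ρ r σ : ℝ)
    (hρ : 0 < ρ) (hr : 2 ≤ r)
    (hσ : σ = ρ * Real.sqrt (x ⬝ᵥ x) ^ (r - 2))
    (hx : (A + σ • (1 : Matrix (Fin n) (Fin n) ℝ)) *ᵥ x = b)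
    (hpsd : (A + σ • (1 : Matrix (Fin n) (Fin n) ℝ)).PosSemidef) :
    ∀ y : Fin n → ℝ,
      (1/2) * (x ⬝ᵥ (A *ᵥ x)) - b ⬝ᵥ x + (ρ/r) * Real.sqrt (x ⬝ᵥ x) ^ r ≤
      (1/2) * (y ⬝ᵥ (A *ᵥ y)) - b ⬝ᵥ y + (ρ/r) * Real.sqrt (y ⬝ᵥ y) ^ r := by
  intro y
  have hquad := hpsd.quadratic_le_of_mulVec_eq_s2 hx y
  have hnorm : ∀ z : Fin n → ℝ, Real.sqrt (z ⬝ᵥ z) ^ 2 = z ⬝ᵥ z := fun z =>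
    Real.sq_sqrt (by simpa using dotProduct_self_star_nonneg z)
  have hshift : ∀ z : Fin n → ℝ,
      z ⬝ᵥ ((A + σ • 1) *ᵥ z) = z ⬝ᵥ (A *ᵥ z) + σ * Real.sqrt (z ⬝ᵥ z) ^ 2 := fun z => by
    rw [hnorm, add_mulVec, smul_mulVec, one_mulVec, dotProduct_add, dotProduct_smul, smul_eq_mul]
  have hreg := rpow_div_sub_sq_le hρ.le hr (Real.sqrt_nonneg (x ⬝ᵥ x)) (Real.sqrt_nonneg (y ⬝ᵥ y))
  rw [hshift, hshift] at hquad
  rw [← hσ] at hreg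
  linarith

theorem stmt2 {n : ℕ} (A : Matrix (Fin n) (Fin n) ℝ) (b x : Fin n → ℝ) (ρ r σ : ℝ)
    (hA : A.IsSymm) (hρ : 0 < ρ) (hr : 2 ≤ r)
    (hσ : σ = ρ * Real.sqrt (x ⬝ᵥ x) ^ (r - 2))
    (hx : (A + σ • (1 : Matrix (Fin n) (Fin n) ℝ)) *ᵥ x = b)
    (hpsd : (A + σ • (1 : Matrix (Fin n) (Fin n) ℝ)).PosSemidef) :
    ∀ y : Fin n → ℝ,
      (1/2) * (x ⬝ᵥ (A *ᵥ x)) - b ⬝ᵥ x + (ρ/r) * Real.sqrt (x ⬝ᵥ x) ^ r ≤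
      (1/2) * (y ⬝ᵥ (A *ᵥ y)) - b ⬝ᵥ y + (ρ/r) * Real.sqrt (y ⬝ᵥ y) ^ r :=
  stmt2_general A b x ρ r σ hρ hr hσ hx hpsd
end

section
/- Let S = PᵀP with P ∈ ℝ^{n×n} invertible, let A be symmetric invertible, and b ∈ ℝⁿ. With A_P = P^{-T}AP^{-1} and b_P = P^{-T}b, the extended Krylov subspace span{b_P, A_P⁻¹b_P, A_P b_P, ..., A_P^{-m}b_P, A_P^m b_P} equals P^{-T} · span{b, (SA⁻¹)b, (AS⁻¹)b, ..., (SA⁻¹)^m b, (AS⁻¹)^m b}. -/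
open Matrix

/-!
With `T = P⁻ᵀ` and `S = PᵀP`, the transformed matrix `A_P = T A P⁻¹` satisfies
`T (A S⁻¹) = A_P T` and `T (S A⁻¹) = A_P⁻¹ T`. Powers of such intertwining relations persist, so
`A_P^{±k} (T b) = T (AS⁻¹)^k b` resp. `T (SA⁻¹)^k b`: the generating sets correspond under `T`,
and `span` commutes with the linear map `T`.
-/

namespace Matrix

variable {ι K : Type*} [Fintype ι] [DecidableEq ι] [CommRing K]

theorem semiconjBy_inv_transpose_congruence (P A : Matrix ι ι K) :
    SemiconjBy (P⁻¹)ᵀ (A * (Pᵀ * P)⁻¹) ((P⁻¹)ᵀ * A * P⁻¹) := by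
  simp only [SemiconjBy, Matrix.mul_inv_rev, transpose_nonsing_inv, Matrix.mul_assoc]

theorem semiconjBy_inv_transpose_congruence_inv {P : Matrix ι ι K} (hP : IsUnit P)
    (A : Matrix ι ι K) :
    SemiconjBy (P⁻¹)ᵀ (Pᵀ * P * A⁻¹) ((P⁻¹)ᵀ * A * P⁻¹)⁻¹ := by
  have hPd : IsUnit P.det := (isUnit_iff_isUnit_det P).mp hP
  have hPtd : IsUnit Pᵀ.det := by rwa [det_transpose]
  simp only [SemiconjBy, Matrix.mul_inv_rev, transpose_nonsing_inv, nonsing_inv_nonsing_inv _ hPd,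
    nonsing_inv_nonsing_inv _ hPtd, Matrix.mul_assoc, nonsing_inv_mul_cancel_left _ _ hPtd,
    mul_nonsing_inv _ hPtd, Matrix.mul_one]

theorem pow_mulVec_mulVec_of_semiconjBy {T X M : Matrix ι ι K} (h : SemiconjBy T X M) (k : ℕ)
    (b : ι → K) : M ^ k *ᵥ T *ᵥ b = T *ᵥ X ^ k *ᵥ b := by
  rw [mulVec_mulVec, mulVec_mulVec, (h.pow_right k).eq]

theorem zpow_mulVec_setOf_eq_image {T X Y M : Matrix ι ι K} (hY : SemiconjBy T Y M)
    (hX : SemiconjBy T X M⁻¹) (b : ι → K) (m : ℕ) :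
    {v | ∃ j : ℤ, -(m : ℤ) ≤ j ∧ j ≤ (m : ℤ) ∧ v = M ^ j *ᵥ T *ᵥ b} =
      T.mulVecLin '' {v | ∃ k : ℕ, k ≤ m ∧ (v = X ^ k *ᵥ b ∨ v = Y ^ k *ᵥ b)} := by
  ext v
  constructor
  · rintro ⟨j, hlo, hhi, rfl⟩
    obtain ⟨k, rfl | rfl⟩ := Int.eq_nat_or_neg j
    · refine ⟨Y ^ k *ᵥ b, ⟨k, by omega, Or.inr rfl⟩, ?_⟩
      rw [mulVecLin_apply, zpow_natCast, pow_mulVec_mulVec_of_semiconjBy hY]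
    · refine ⟨X ^ k *ᵥ b, ⟨k, by omega, Or.inl rfl⟩, ?_⟩
      rw [mulVecLin_apply, zpow_neg_natCast, ← inv_pow', pow_mulVec_mulVec_of_semiconjBy hX]
  · rintro ⟨w, ⟨k, hk, rfl | rfl⟩, rfl⟩
    · refine ⟨-k, by omega, by omega, ?_⟩
      rw [mulVecLin_apply, zpow_neg_natCast, ← inv_pow', pow_mulVec_mulVec_of_semiconjBy hX]
    · refine ⟨k, by omega, by omega, ?_⟩
      rw [mulVecLin_apply, zpow_natCast, pow_mulVec_mulVec_of_semiconjBy hY]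

end Matrix

theorem stmt16_general {n : ℕ} (P A : Matrix (Fin n) (Fin n) ℝ) (b : Fin n → ℝ) (m : ℕ)
    (hP : IsUnit P) :
    Submodule.span ℝ
      {v : Fin n → ℝ | ∃ j : ℤ, -(m : ℤ) ≤ j ∧ j ≤ (m : ℤ) ∧
        v = (((P⁻¹)ᵀ * A * P⁻¹) ^ j) *ᵥ ((P⁻¹)ᵀ *ᵥ b)} =
    Submodule.map (Matrix.mulVecLin ((P⁻¹)ᵀ))
      (Submodule.span ℝ
        {v : Fin n → ℝ | ∃ k : ℕ, k ≤ m ∧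
          (v = (((Pᵀ * P) * A⁻¹) ^ k) *ᵥ b ∨ v = ((A * (Pᵀ * P)⁻¹) ^ k) *ᵥ b)}) := by
  rw [Submodule.map_span, ← zpow_mulVec_setOf_eq_image (semiconjBy_inv_transpose_congruence P A)
    (semiconjBy_inv_transpose_congruence_inv hP A)]

theorem stmt16 {n : ℕ} (P A : Matrix (Fin n) (Fin n) ℝ) (b : Fin n → ℝ) (m : ℕ)
    (hP : IsUnit P) (hA : A.IsSymm) (hAinv : IsUnit A) :
    Submodule.span ℝ
      {v : Fin n → ℝ | ∃ j : ℤ, -(m : ℤ) ≤ j ∧ j ≤ (m : ℤ) ∧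
        v = (((P⁻¹)ᵀ * A * P⁻¹) ^ j) *ᵥ ((P⁻¹)ᵀ *ᵥ b)} =
    Submodule.map (Matrix.mulVecLin ((P⁻¹)ᵀ))
      (Submodule.span ℝ
        {v : Fin n → ℝ | ∃ k : ℕ, k ≤ m ∧
          (v = (((Pᵀ * P) * A⁻¹) ^ k) *ᵥ b ∨ v = ((A * (Pᵀ * P)⁻¹) ^ k) *ᵥ b)}) :=
  stmt16_general P A b m hP
end
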